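/- arXiv:1707.06687 — 2 statements merged into one kernel-verified Lean document; each statement's English description precedes it below -/
import Mathlib

section
/- Let K be a field of characteristic zero and μ ∈ K a nonzero scalar. In the algebra Ã, set r = 1 + u and let K = {f ∈ Ã : rf ∈ ωÃ}. Then (i) Ã = rÃ + ωÃ (indeed 1 = r(1 + μω) + ω(−μ(1 + μ⁻¹u))), and (ii) K = aÃ + bÃ, where a = (ω + μ⁻¹)(1 + u) − μ⁻¹ and b = ω² + μ⁻¹ω. -/
noncomputable section

/-- Defining relation of the algebra `Ã = K[u][ω;σ,δ]` with `σ(u) = μ⁻¹u`, `δ(u) = -μ⁻¹u`: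
with `u = ι 0` and `ω = ι 1`, the relation is `uω = μ⁻¹ωu − μ⁻¹u`. -/
inductive TildeRel (K : Type) [Field K] (μ : K) :
    FreeAlgebra K (Fin 2) → FreeAlgebra K (Fin 2) → Prop
  | rel : TildeRel K μ
      (FreeAlgebra.ι K (0 : Fin 2) * FreeAlgebra.ι K (1 : Fin 2))
      (μ⁻¹ • (FreeAlgebra.ι K (1 : Fin 2) * FreeAlgebra.ι K (0 : Fin 2)) -
        μ⁻¹ • FreeAlgebra.ι K (0 : Fin 2))

/-- The algebra `Ã`. -/
abbrev TildeA (K : Type) [Field K] (μ : K) := RingQuot (TildeRel K μ)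

/-- The generator `u` of `Ã`. -/
def TildeA.u (K : Type) [Field K] (μ : K) : TildeA K μ :=
  RingQuot.mkAlgHom K (TildeRel K μ) (FreeAlgebra.ι K (0 : Fin 2))

/-- The generator `ω` of `Ã`. -/
def TildeA.w (K : Type) [Field K] (μ : K) : TildeA K μ :=
  RingQuot.mkAlgHom K (TildeRel K μ) (FreeAlgebra.ι K (1 : Fin 2))

/-- Left multiplication by `r` as an endomorphism of `A` viewed as a right `A`-module
(i.e. as a left `Aᵐᵒᵖ`-module). -/
def leftMulRight {A : Type} [Ring A] (r : A) : A →ₗ[Aᵐᵒᵖ] A where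
  toFun x := r * x
  map_add' := mul_add r
  map_smul' m x := by
    simp only [MulOpposite.smul_eq_mul_unop, RingHom.id_apply, mul_assoc]

namespace TildeAProof

variable (K : Type) [Field K] (μ : K)

local notation "A" => TildeA K μ
local notation "uu" => TildeA.u K μ
local notation "ww" => TildeA.w K μ

-- specialized arithmetic lemmas for `A` (RingQuot instances block generic simp matching)
lemma Amul_add (x y z : A) : x * (y + z) = x * y + x * z := mul_add x y z
lemma Aadd_mul (x y z : A) : (x + y) * z = x * z + y * z := add_mul x y z
lemma Amul_sub (x y z : A) : x * (y - z) = x * y - x * z := mul_sub x y z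
lemma Asub_mul (x y z : A) : (x - y) * z = x * z - y * z := sub_mul x y z
lemma Amul_neg (x y : A) : x * (-y) = -(x * y) := mul_neg x y
lemma Aneg_mul (x y : A) : (-x) * y = -(x * y) := neg_mul x y
lemma Amul_one (x : A) : x * 1 = x := mul_one x
lemma Aone_mul (x : A) : 1 * x = x := one_mul x
lemma Amul_assoc (x y z : A) : x * y * z = x * (y * z) := mul_assoc x y z
lemma Asmul_mul (c : K) (x y : A) : (c • x) * y = c • (x * y) := smul_mul_assoc c x y
lemma Amul_smul (c : K) (x y : A) : x * (c • y) = c • (x * y) := (mul_smul_comm c x y)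
lemma Asmul_smul (c d : K) (x : A) : c • d • x = (c * d) • x := (smul_smul c d x)
lemma Asmul_add (c : K) (x y : A) : c • (x + y) = c • x + c • y := smul_add c x y
lemma Asmul_sub (c : K) (x y : A) : c • (x - y) = c • x - c • y := smul_sub c x y
lemma Asmul_neg (c : K) (x : A) : c • (-x) = -(c • x) := smul_neg c x
lemma Aneg_smul (c : K) (x : A) : (-c) • x = -(c • x) := neg_smul c x
lemma Aone_smul (x : A) : (1 : K) • x = x := one_smul K x
lemma Aneg_neg (x : A) : -(-x) = x := neg_neg x

lemma rel1 : uu * ww = μ⁻¹ • (ww * uu) - μ⁻¹ • uu := by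
  have h := RingQuot.mkAlgHom_rel K (TildeRel.rel (K := K) (μ := μ))
  simpa [TildeA.u, TildeA.w, map_mul, map_sub, map_smul] using h

/-- scalar sequence `c n` with `δ(uⁿ) = c n • uⁿ`. -/
def cseq : ℕ → K
  | 0 => 0
  | n + 1 => μ⁻¹ * cseq n - μ⁻¹

variable {μ}

lemma identity2 (hμ : μ ≠ 0) : (1 : A) =
    (1 + uu) * (1 + μ • ww) + ww * (-(μ • (1 + μ⁻¹ • uu))) := by
  simp only [Amul_add, Aadd_mul, Amul_one, Aone_mul, Amul_neg, Aneg_mul, Amul_smul, Asmul_mul,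
    Asmul_add, Asmul_sub, Asmul_smul, Asmul_neg, Aneg_neg, rel1 K μ]
  match_scalars <;> field_simp <;> ring

lemma Azero_smul (x : A) : (0 : K) • x = 0 := zero_smul K x
lemma Aadd_zero (x : A) : x + 0 = x := add_zero x

lemma rel_uwx (x : A) : uu * (ww * x) = μ⁻¹ • (ww * (uu * x)) - μ⁻¹ • (uu * x) := by
  rw [← Amul_assoc, rel1 K μ, Asub_mul, Asmul_mul, Asmul_mul, Amul_assoc]

lemma pow_mul_w (n : ℕ) :
    uu ^ n * ww = (μ⁻¹) ^ n • (ww * uu ^ n) + cseq K μ n • uu ^ n := by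
  induction n with
  | zero => simp only [pow_zero, Aone_mul, Amul_one, cseq, Azero_smul, Aadd_zero, Aone_smul]
  | succ n IH =>
    simp only [pow_succ]
    rw [Amul_assoc, rel1 K μ, Amul_sub, Amul_smul, Amul_smul, ← Amul_assoc, IH,
      Aadd_mul, Asmul_mul, Asmul_mul, Amul_assoc K μ ww]
    match_scalars
    · ring
    · simp only [cseq]; ring

lemma rmul_a (hμ : μ ≠ 0) :
    (1 + uu) * ((ww + μ⁻¹ • 1) * (1 + uu) - μ⁻¹ • 1) =
      ww * ((1 + uu) * (1 + μ⁻¹ • uu)) := by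
  simp only [Amul_add, Aadd_mul, Amul_sub, Asub_mul, Amul_one, Aone_mul, Amul_neg, Aneg_mul,
    Amul_smul, Asmul_mul, Asmul_add, Asmul_sub, Asmul_smul, Asmul_neg, Aneg_neg, Amul_assoc,
    rel_uwx K (μ := μ), rel1 K μ]
  match_scalars <;> field_simp <;> ring

lemma rmul_b (hμ : μ ≠ 0) :
    (1 + uu) * (ww * ww + μ⁻¹ • ww) =
      ww * (ww + μ⁻¹ • 1 + (μ⁻¹ * μ⁻¹) • (ww * uu) - (μ⁻¹ * μ⁻¹) • uu) := by
  simp only [Amul_add, Aadd_mul, Amul_sub, Asub_mul, Amul_one, Aone_mul, Amul_neg, Aneg_mul,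
    Amul_smul, Asmul_mul, Asmul_add, Asmul_sub, Asmul_smul, Asmul_neg, Aneg_neg, Amul_assoc,
    rel_uwx K (μ := μ), rel1 K μ]
  match_scalars <;> field_simp <;> ring

lemma a_decomp (hμ : μ ≠ 0) :
    TildeA.u K μ = μ • ((ww + μ⁻¹ • 1) * (1 + uu) - μ⁻¹ • 1)
      - μ • ww - μ • (ww * uu) := by
  simp only [Amul_add, Aadd_mul, Amul_sub, Asub_mul, Amul_one, Aone_mul,
    Amul_smul, Asmul_mul, Asmul_add, Asmul_sub, Asmul_smul]
  match_scalars <;> field_simp <;> ring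

lemma ww_sq (hμ : μ ≠ 0) : ww * ww = (ww * ww + μ⁻¹ • ww) - μ⁻¹ • ww := by
  match_scalars <;> field_simp <;> ring

/-! ### The representation on `ℕ →₀ K` (the module `Ã/ωÃ`) -/

variable (μ)

/-- `u` acts (on the right) as the shift `single n a ↦ single (n+1) a`. -/
def Uop : (ℕ →₀ K) →ₗ[K] (ℕ →₀ K) := Finsupp.lsum K fun n => Finsupp.lsingle (n + 1)

/-- `ω` acts (on the right) as the diagonal operator `single n a ↦ cseq n • single n a`. -/
def Wop : (ℕ →₀ K) →ₗ[K] (ℕ →₀ K) :=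
  Finsupp.lsum K fun n => cseq K μ n • Finsupp.lsingle n

lemma Uop_single (n : ℕ) (a : K) :
    Uop K (Finsupp.single n a) = Finsupp.single (n + 1) a := by
  simp [Uop]

lemma Wop_single (n : ℕ) (a : K) :
    Wop K μ (Finsupp.single n a) = cseq K μ n • Finsupp.single n a := by
  simp [Wop]

lemma endorel :
    Wop K μ * Uop K = μ⁻¹ • (Uop K * Wop K μ) - μ⁻¹ • Uop K := by
  apply Finsupp.lhom_ext
  intro n a
  simp only [Module.End.mul_apply, LinearMap.sub_apply, LinearMap.smul_apply,
    Uop_single, Wop_single, map_smul, smul_smul, cseq, sub_smul]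

/-- The (anti-)representation of `Ã` on `ℕ →₀ K`. -/
def psi : TildeA K μ →ₐ[K] (Module.End K (ℕ →₀ K))ᵐᵒᵖ :=
  RingQuot.liftAlgHom K
    ⟨FreeAlgebra.lift K ![MulOpposite.op (Uop K), MulOpposite.op (Wop K μ)], by
      rintro x y ⟨⟩
      simp only [map_mul, map_sub, map_smul, FreeAlgebra.lift_ι_apply,
        Matrix.cons_val_zero, Matrix.cons_val_one, Matrix.head_cons,
        ← MulOpposite.op_mul, ← MulOpposite.op_smul, ← MulOpposite.op_sub]
      exact congrArg MulOpposite.op (endorel K μ)⟩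

lemma psi_u : psi K μ uu = MulOpposite.op (Uop K) := by
  rw [TildeA.u, psi, RingQuot.liftAlgHom_mkAlgHom_apply]
  simp [FreeAlgebra.lift_ι_apply]

lemma psi_w : psi K μ ww = MulOpposite.op (Wop K μ) := by
  rw [TildeA.w, psi, RingQuot.liftAlgHom_mkAlgHom_apply]
  simp [FreeAlgebra.lift_ι_apply]

/-- the class of `x` in `Ã/ωÃ`, i.e. `(ψ x)ᵘⁿᵒᵖ` applied to `e₀`. -/
def Phi0 : TildeA K μ →ₗ[K] (ℕ →₀ K) where
  toFun x := (psi K μ x).unop (Finsupp.single 0 1)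
  map_add' x y := by simp [map_add]
  map_smul' c x := by simp [map_smul]

lemma Phi0_mul (x y : TildeA K μ) :
    Phi0 K μ (x * y) = (psi K μ y).unop (Phi0 K μ x) := by
  simp [Phi0, map_mul, MulOpposite.unop_mul, Module.End.mul_apply]

/-- `Φ f = Φ₀((1+u)f)`, the class of `(1+u)·f` in `Ã/ωÃ`. -/
def Phi : TildeA K μ →ₗ[K] (ℕ →₀ K) where
  toFun x := (psi K μ x).unop (Finsupp.single 0 1 + Finsupp.single 1 1)
  map_add' x y := by simp [map_add]; abel
  map_smul' c x := by simp [map_smul]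

lemma Phi0_r_mul (f : TildeA K μ) : Phi0 K μ ((1 + uu) * f) = Phi K μ f := by
  rw [Phi0_mul]
  have h1 : Phi0 K μ (1 + uu) = Finsupp.single 0 1 + Finsupp.single 1 1 := by
    simp [Phi0, map_add, psi_u, map_one, Uop_single]
  rw [h1]; rfl

lemma Phi0_vanish (s : TildeA K μ)
    (hs : s ∈ Submodule.span (TildeA K μ)ᵐᵒᵖ {(ww : TildeA K μ)}) : Phi0 K μ s = 0 := by
  induction hs using Submodule.span_induction with
  | mem x hx =>
    rcases hx with rfl
    simp [Phi0, psi_w, Wop_single, cseq]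
  | zero => simp
  | add x y _ _ hx hy => rw [map_add, hx, hy, add_zero]
  | smul c x _ hx =>
    rw [MulOpposite.smul_eq_mul_unop, Phi0_mul, hx, map_zero]

lemma Phi_mul (x y : TildeA K μ) :
    Phi K μ (x * y) = (psi K μ y).unop (Phi K μ x) := by
  simp [Phi, map_mul, MulOpposite.unop_mul, Module.End.mul_apply]

lemma Phi_one : Phi K μ 1 = Finsupp.single 0 1 + Finsupp.single 1 1 := by
  simp [Phi, map_one]

lemma Phi_w : Phi K μ ww = -(μ⁻¹ • Finsupp.single 1 1) := by
  simp [Phi, psi_w, map_add, Wop_single, cseq]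

lemma Uop_pow (n k : ℕ) (a : K) :
    (Uop K ^ n) (Finsupp.single k a) = Finsupp.single (k + n) a := by
  induction n generalizing k with
  | zero => simp
  | succ n IH =>
    rw [pow_succ, Module.End.mul_apply, Uop_single, IH]
    congr 1
    omega

lemma psi_u_pow (n : ℕ) : psi K μ (uu ^ n) = MulOpposite.op (Uop K ^ n) := by
  rw [map_pow, psi_u, MulOpposite.op_pow]

lemma Phi_w_un (n : ℕ) :
    Phi K μ (ww * uu ^ n) = -(μ⁻¹ • Finsupp.single (n + 1) 1) := by
  rw [Phi_mul, psi_u_pow, Phi_w]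
  simp [map_neg, map_smul, Uop_pow, Nat.add_comm 1 n]

/-- the complement family: `1 + μω` and `(-μ)·ωuⁿ`. -/
def vfam : Option ℕ → TildeA K μ
  | none => 1 + μ • ww
  | some n => (-μ) • (ww * uu ^ n)

def idx : Option ℕ → ℕ := fun o => o.elim 0 (· + 1)

lemma idx_inj : Function.Injective idx := by
  intro a b h
  cases a <;> cases b <;> simp [idx] at h <;> simp [h]

variable {μ}

lemma Phi_vfam (hμ : μ ≠ 0) (o : Option ℕ) :
    Phi K μ (vfam K μ o) = Finsupp.single (idx o) 1 := by
  cases o with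
  | none =>
    simp only [vfam, idx, map_add, map_smul, Phi_one, Phi_w, Option.elim,
      smul_neg, smul_smul, mul_inv_cancel₀ hμ, one_smul]
    abel
  | some n =>
    simp only [vfam, idx, map_smul, Phi_w_un, Option.elim, smul_neg, smul_smul]
    rw [show (-μ * μ⁻¹) = -1 by field_simp]
    simp

lemma indep (hμ : μ ≠ 0) :
    LinearIndependent K (fun o => Phi K μ (vfam K μ o)) := by
  have h : (fun o => Phi K μ (vfam K μ o)) =
      (fun o => (Finsupp.basisSingleOne (R := K) (ι := ℕ)) (idx o)) := by
    funext o
    rw [Phi_vfam K hμ, Finsupp.coe_basisSingleOne]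
  rw [h]
  exact Finsupp.basisSingleOne.linearIndependent.comp idx idx_inj

/-! ### The decomposition `Ã = aÃ + bÃ + C` -/

variable (μ)

def aelt : TildeA K μ := (ww + μ⁻¹ • 1) * (1 + uu) - μ⁻¹ • 1

def belt : TildeA K μ := ww * ww + μ⁻¹ • ww

def Tsub : Submodule (TildeA K μ)ᵐᵒᵖ (TildeA K μ) :=
  Submodule.span (TildeA K μ)ᵐᵒᵖ {aelt K μ, belt K μ}

def Csub : Submodule K (TildeA K μ) := Submodule.span K (Set.range (vfam K μ))

def Dsub : Submodule K (TildeA K μ) := (Tsub K μ).restrictScalars K ⊔ Csub K μ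

lemma Tsub_mul {t : TildeA K μ} (ht : t ∈ Tsub K μ) (x : TildeA K μ) :
    t * x ∈ Tsub K μ := by
  simpa [MulOpposite.smul_eq_mul_unop] using
    (Tsub K μ).smul_mem (MulOpposite.op x) ht

lemma aelt_mem : aelt K μ ∈ Tsub K μ :=
  Submodule.subset_span (by simp)

lemma belt_mem : belt K μ ∈ Tsub K μ :=
  Submodule.subset_span (by simp)

lemma Csub_le_Dsub : Csub K μ ≤ Dsub K μ := le_sup_right

lemma Tmul_mem_Dsub {t : TildeA K μ} (ht : t ∈ Tsub K μ) : t ∈ Dsub K μ :=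
  le_sup_left (α := Submodule K (TildeA K μ)) ht

variable {μ}

lemma w_un_mem_C (hμ : μ ≠ 0) (n : ℕ) : ww * uu ^ n ∈ Csub K μ := by
  have h : ww * uu ^ n = (-μ⁻¹) • vfam K μ (some n) := by
    simp only [vfam, Asmul_smul]
    rw [show (-μ⁻¹ * -μ) = μ⁻¹ * μ by ring, inv_mul_cancel₀ hμ, Aone_smul]
  rw [h]
  exact Submodule.smul_mem _ _ (Submodule.subset_span ⟨some n, rfl⟩)

lemma w_mem_C (hμ : μ ≠ 0) : ww ∈ Csub K μ := by
  have := w_un_mem_C K hμ 0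
  rwa [pow_zero, Amul_one] at this

lemma w_u_mem_C (hμ : μ ≠ 0) : ww * uu ∈ Csub K μ := by
  have := w_un_mem_C K hμ 1
  rwa [pow_one] at this

lemma u_mem_D (hμ : μ ≠ 0) : uu ∈ Dsub K μ := by
  have h : uu = μ • aelt K μ - μ • ww - μ • (ww * uu) := a_decomp K hμ
  rw [h]
  exact sub_mem (sub_mem
      (Tmul_mem_Dsub K μ (((Tsub K μ).restrictScalars K).smul_mem μ (aelt_mem K μ)))
      (Csub_le_Dsub K μ (Submodule.smul_mem _ μ (w_mem_C K hμ))))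
    (Csub_le_Dsub K μ (Submodule.smul_mem _ μ (w_u_mem_C K hμ)))

lemma wwn_mem_D (hμ : μ ≠ 0) (n : ℕ) : ww * (ww * uu ^ n) ∈ Dsub K μ := by
  have h : ww * (ww * uu ^ n) = belt K μ * uu ^ n - μ⁻¹ • (ww * uu ^ n) := by
    rw [← Amul_assoc, eq_sub_iff_add_eq, belt, Aadd_mul, Asmul_mul]
  rw [h]
  exact sub_mem
    (Tmul_mem_Dsub K μ (Tsub_mul K μ (belt_mem K μ) _))
    (Csub_le_Dsub K μ (Submodule.smul_mem _ _ (w_un_mem_C K hμ n)))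

lemma gen_u (hμ : μ ≠ 0) (o : Option ℕ) : vfam K μ o * uu ∈ Dsub K μ := by
  cases o with
  | none =>
    rw [show vfam K μ none * uu = uu + μ • (ww * uu) by
      simp only [vfam, Aadd_mul, Aone_mul, Asmul_mul]]
    exact add_mem (u_mem_D K hμ)
      (Csub_le_Dsub K μ (Submodule.smul_mem _ _ (w_u_mem_C K hμ)))
  | some n =>
    rw [show vfam K μ (some n) * uu = vfam K μ (some (n + 1)) by
      simp only [vfam, Asmul_mul, Amul_assoc, pow_succ]]
    exact Csub_le_Dsub K μ (Submodule.subset_span ⟨some (n + 1), rfl⟩)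

lemma gen_w (hμ : μ ≠ 0) (o : Option ℕ) : vfam K μ o * ww ∈ Dsub K μ := by
  cases o with
  | none =>
    rw [show vfam K μ none * ww = ww + μ • (ww * ww) by
      simp only [vfam, Aadd_mul, Aone_mul, Asmul_mul]]
    refine add_mem (Csub_le_Dsub K μ (w_mem_C K hμ)) ?_
    rw [ww_sq K hμ]
    exact Submodule.smul_mem _ _ (sub_mem (Tmul_mem_Dsub K μ (belt_mem K μ))
      (Csub_le_Dsub K μ (Submodule.smul_mem _ _ (w_mem_C K hμ))))
  | some n =>
    rw [show vfam K μ (some n) * ww =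
        (-μ) • ((μ⁻¹ ^ n) • (ww * (ww * uu ^ n)) + cseq K μ n • (ww * uu ^ n)) by
      simp only [vfam, Asmul_mul, Amul_assoc, pow_mul_w K, Amul_add, Amul_smul]]
    exact Submodule.smul_mem _ _ (add_mem
      (Submodule.smul_mem _ _ (wwn_mem_D K hμ n))
      (Submodule.smul_mem _ _ (Csub_le_Dsub K μ (w_un_mem_C K hμ n))))

lemma mem_D (hμ : μ ≠ 0) (f : TildeA K μ) : f ∈ Dsub K μ := by
  have one_mem : (1 : TildeA K μ) ∈ Dsub K μ := by
    rw [show (1 : TildeA K μ) = vfam K μ none + vfam K μ (some 0) by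
      simp only [vfam, pow_zero, Amul_one, Asmul_mul]
      rw [Aneg_smul]
      abel]
    exact add_mem
      (Csub_le_Dsub K μ (Submodule.subset_span ⟨none, rfl⟩))
      (Csub_le_Dsub K μ (Submodule.subset_span ⟨some 0, rfl⟩))
  have mul_u : ∀ d ∈ Dsub K μ, d * uu ∈ Dsub K μ := by
    intro d hd
    rw [Dsub, Submodule.mem_sup] at hd
    obtain ⟨t, ht, c, hc, rfl⟩ := hd
    rw [Aadd_mul]
    refine add_mem (Tmul_mem_Dsub K μ (Tsub_mul K μ ht uu)) ?_
    induction hc using Submodule.span_induction with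
    | mem x hx => obtain ⟨o, rfl⟩ := hx; exact gen_u K hμ o
    | zero => rw [show (0 : TildeA K μ) * uu = 0 from zero_mul _]; exact zero_mem _
    | add x y _ _ hx hy => rw [Aadd_mul]; exact add_mem hx hy
    | smul c x _ hx => rw [Asmul_mul]; exact Submodule.smul_mem _ _ hx
  have mul_w : ∀ d ∈ Dsub K μ, d * ww ∈ Dsub K μ := by
    intro d hd
    rw [Dsub, Submodule.mem_sup] at hd
    obtain ⟨t, ht, c, hc, rfl⟩ := hd
    rw [Aadd_mul]
    refine add_mem (Tmul_mem_Dsub K μ (Tsub_mul K μ ht ww)) ?_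
    induction hc using Submodule.span_induction with
    | mem x hx => obtain ⟨o, rfl⟩ := hx; exact gen_w K hμ o
    | zero => rw [show (0 : TildeA K μ) * ww = 0 from zero_mul _]; exact zero_mem _
    | add x y _ _ hx hy => rw [Aadd_mul]; exact add_mem hx hy
    | smul c x _ hx => rw [Asmul_mul]; exact Submodule.smul_mem _ _ hx
  have key : ∀ x : FreeAlgebra K (Fin 2), ∀ d ∈ Dsub K μ,
      d * RingQuot.mkAlgHom K (TildeRel K μ) x ∈ Dsub K μ := by
    intro x
    refine FreeAlgebra.induction K (Fin 2) ?_ ?_ ?_ ?_ x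
    · intro r d hd
      rw [AlgHom.commutes]
      rw [show d * algebraMap K (TildeA K μ) r = r • d by
        rw [← Algebra.commutes, ← Algebra.smul_def]]
      exact Submodule.smul_mem _ _ hd
    · intro i d hd
      fin_cases i
      · exact mul_u d hd
      · exact mul_w d hd
    · intro p q hp hq d hd
      rw [map_mul, ← Amul_assoc]
      exact hq _ (hp _ hd)
    · intro p q hp hq d hd
      rw [map_add, Amul_add]
      exact add_mem (hp _ hd) (hq _ hd)
  obtain ⟨x, rfl⟩ := RingQuot.mkAlgHom_surjective K (TildeRel K μ) f
  have := key x 1 one_mem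
  rwa [Aone_mul] at this

lemma C_cancel (hμ : μ ≠ 0) {c : TildeA K μ} (hc : c ∈ Csub K μ)
    (h0 : Phi K μ c = 0) : c = 0 := by
  rw [Csub] at hc
  obtain ⟨l, rfl⟩ := Finsupp.mem_span_range_iff_exists_finsupp.mp hc
  have hl : Finsupp.linearCombination K (fun o => Phi K μ (vfam K μ o)) l = 0 := by
    rw [Finsupp.linearCombination_apply, ← h0, map_finsuppSum]
    exact Finsupp.sum_congr fun i _ => (map_smul (Phi K μ) _ _).symm
  have hl0 := linearIndependent_iff.mp (indep K hμ) l hl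
  rw [hl0]
  exact Finsupp.sum_zero_index

lemma mul_w_mem_S (x : TildeA K μ) :
    ww * x ∈ Submodule.span (TildeA K μ)ᵐᵒᵖ {(ww : TildeA K μ)} := by
  simpa [MulOpposite.smul_eq_mul_unop] using
    Submodule.smul_mem (Submodule.span (TildeA K μ)ᵐᵒᵖ {(ww : TildeA K μ)})
      (MulOpposite.op x) (Submodule.mem_span_singleton_self (ww : TildeA K μ))

lemma T_le_comap (hμ : μ ≠ 0) :
    Tsub K μ ≤ Submodule.comap (leftMulRight (1 + uu))
      (Submodule.span (TildeA K μ)ᵐᵒᵖ {(ww : TildeA K μ)}) := by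
  rw [Tsub, Submodule.span_le]
  rintro x hx
  rcases hx with rfl | hx
  · simp only [SetLike.mem_coe, Submodule.mem_comap]
    show (1 + uu) * aelt K μ ∈ _
    have h : (1 + uu) * aelt K μ = ww * ((1 + uu) * (1 + μ⁻¹ • uu)) := rmul_a K hμ
    rw [h]
    exact mul_w_mem_S K _
  · rcases hx with rfl
    simp only [SetLike.mem_coe, Submodule.mem_comap]
    show (1 + uu) * belt K μ ∈ _
    have h : (1 + uu) * belt K μ =
        ww * (ww + μ⁻¹ • 1 + (μ⁻¹ * μ⁻¹) • (ww * uu) - (μ⁻¹ * μ⁻¹) • uu) := rmul_b K hμ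
    rw [h]
    exact mul_w_mem_S K _

end TildeAProof

/-- In `Ã`, with `r = 1 + u` and `K = {f ∈ Ã : rf ∈ ωÃ}`:
(i) `Ã = rÃ + ωÃ`, indeed `1 = r(1 + μω) + ω(−μ(1 + μ⁻¹u))`; and
(ii) `K = aÃ + bÃ` where `a = (ω + μ⁻¹)(1 + u) − μ⁻¹` and `b = ω² + μ⁻¹ω`. -/
theorem tildeA_ideal_generators
    (K : Type) [Field K] [CharZero K] (μ : K) (hμ : μ ≠ 0) :
    (Submodule.span (TildeA K μ)ᵐᵒᵖ {1 + TildeA.u K μ} ⊔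
        Submodule.span (TildeA K μ)ᵐᵒᵖ {TildeA.w K μ} = ⊤) ∧
    ((1 : TildeA K μ) =
        (1 + TildeA.u K μ) * (1 + μ • TildeA.w K μ) +
          TildeA.w K μ * (-(μ • (1 + μ⁻¹ • TildeA.u K μ)))) ∧
    (Submodule.comap (leftMulRight (1 + TildeA.u K μ))
        (Submodule.span (TildeA K μ)ᵐᵒᵖ {TildeA.w K μ}) =
      Submodule.span (TildeA K μ)ᵐᵒᵖ
        {(TildeA.w K μ + μ⁻¹ • 1) * (1 + TildeA.u K μ) - μ⁻¹ • 1,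
         TildeA.w K μ * TildeA.w K μ + μ⁻¹ • TildeA.w K μ}) := by
  open TildeAProof in
  refine ⟨?_, identity2 K hμ, ?_⟩
  · -- part (i)
    set P := Submodule.span (TildeA K μ)ᵐᵒᵖ {1 + TildeA.u K μ} ⊔
        Submodule.span (TildeA K μ)ᵐᵒᵖ {TildeA.w K μ} with hP
    have hmem : (1 + TildeA.u K μ) * (1 + μ • TildeA.w K μ) +
        TildeA.w K μ * (-(μ • (1 + μ⁻¹ • TildeA.u K μ))) ∈ P := by
      refine add_mem (Submodule.mem_sup_left ?_) (Submodule.mem_sup_right ?_)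
      · simpa only [MulOpposite.smul_eq_mul_unop, MulOpposite.unop_op] using
          Submodule.smul_mem _ (MulOpposite.op (1 + μ • TildeA.w K μ))
            (Submodule.mem_span_singleton_self (1 + TildeA.u K μ))
      · simpa only [MulOpposite.smul_eq_mul_unop, MulOpposite.unop_op] using
          Submodule.smul_mem _ (MulOpposite.op (-(μ • (1 + μ⁻¹ • TildeA.u K μ))))
            (Submodule.mem_span_singleton_self (TildeA.w K μ))
    have h1 : (1 : TildeA K μ) ∈ P := by
      have := identity2 K hμ
      exact this ▸ hmem
    rw [eq_top_iff]
    intro x _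
    have := P.smul_mem (MulOpposite.op x) h1
    simpa only [MulOpposite.smul_eq_mul_unop, MulOpposite.unop_op, Aone_mul] using this
  · -- part (iii)
    apply le_antisymm
    · intro f hf
      have hrf : (1 + TildeA.u K μ) * f ∈
          Submodule.span (TildeA K μ)ᵐᵒᵖ {TildeA.w K μ} := hf
      have hfD := mem_D K hμ f
      rw [Dsub, Submodule.mem_sup] at hfD
      obtain ⟨t, ht, c, hc, hftc⟩ := hfD
      have ht' : t ∈ Tsub K μ := ht
      have hrt : (1 + TildeA.u K μ) * t ∈
          Submodule.span (TildeA K μ)ᵐᵒᵖ {TildeA.w K μ} := T_le_comap K hμ ht'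
      have hrc : (1 + TildeA.u K μ) * c ∈
          Submodule.span (TildeA K μ)ᵐᵒᵖ {TildeA.w K μ} := by
        have he : (1 + TildeA.u K μ) * c = (1 + TildeA.u K μ) * f - (1 + TildeA.u K μ) * t := by
          rw [← hftc, Amul_add]
          exact (add_sub_cancel_left _ _).symm
        rw [he]
        exact sub_mem hrf hrt
      have h0 : Phi K μ c = 0 := by
        rw [← Phi0_r_mul]
        exact Phi0_vanish K μ _ hrc
      have hc0 : c = 0 := C_cancel K hμ hc h0
      rw [← hftc, hc0, add_zero]
      exact ht'
    · exact T_le_comap K hμ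

end
end

section
/- Let K be an algebraically closed field of characteristic zero and α, β ∈ K with β ≠ 0 and α + β = 1, so that the roots of t² − αt − β are 1 and μ = −β; assume μ ≠ 1 and μ is not a root of unity. Let φ be the K-algebra automorphism of the polynomial ring K[x,y] determined by φ(x) = y and φ(y) = αy + βx. If Q is a maximal ideal of K[x,y] such that x ∈ φⁿ(Q) for infinitely many n ∈ ℕ, then φⁿ(Q) = Q for some n ≥ 1. -/
noncomputable section

open MvPolynomial in
/-- Let `K` be algebraically closed of characteristic zero, `β ≠ 0`,
`α + β = 1`, `μ = −β` with `μ ≠ 1` not a root of unity, and let `φ` be the `K`-algebra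
automorphism of `K[x,y]` with `φ(x) = y`, `φ(y) = αy + βx`. If `Q` is a maximal ideal of
`K[x,y]` with `x ∈ φⁿ(Q)` for infinitely many `n`, then `φⁿ(Q) = Q` for some `n ≥ 1`. -/
theorem periodic_maximal_ideal
    (K : Type) [Field K] [IsAlgClosed K] [CharZero K] (α β : K)
    (hβ : β ≠ 0) (h1 : α + β = 1) (hμ1 : -β ≠ 1)
    (hμru : ∀ n : ℕ, 0 < n → (-β) ^ n ≠ 1)
    (φ : MvPolynomial (Fin 2) K ≃ₐ[K] MvPolynomial (Fin 2) K)
    (hφx : φ (MvPolynomial.X 0) = MvPolynomial.X 1)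
    (hφy : φ (MvPolynomial.X 1) = α • MvPolynomial.X 1 + β • MvPolynomial.X 0)
    (Q : Ideal (MvPolynomial (Fin 2) K)) (hQ : Q.IsMaximal)
    (hinf : {n : ℕ |
        MvPolynomial.X 0 ∈ Ideal.map ((φ ^ n).toAlgHom : MvPolynomial (Fin 2) K →ₐ[K] MvPolynomial (Fin 2) K) Q}.Infinite) :
    ∃ n : ℕ, 1 ≤ n ∧
      Ideal.map ((φ ^ n).toAlgHom : MvPolynomial (Fin 2) K →ₐ[K] MvPolynomial (Fin 2) K) Q = Q := by
  classical
  set R := MvPolynomial (Fin 2) K with hR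
  set u : R := β • X 0 + X 1 with hu_def
  set v : R := X 1 - X 0 with hv_def
  set c : K := (-β)⁻¹ with hc_def
  have hnb : (-β : K) ≠ 0 := neg_ne_zero.mpr hβ
  have hc0 : c ≠ 0 := inv_ne_zero hnb
  have hβ1 : (1 : K) + β ≠ 0 := fun h => hμ1 (by linear_combination -h)
  have hα : α = 1 - β := by linear_combination h1
  -- scalar multiplication membership helpers
  have hsmul_of : ∀ (a : K) (w : R), w ∈ Q → a • w ∈ Q := by
    intro a w hw
    rw [smul_eq_C_mul]; exact Q.mul_mem_left _ hw
  have hsmul : ∀ (a : K) (w : R), a ≠ 0 → a • w ∈ Q → w ∈ Q := by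
    intro a w ha h
    have h2 : (a⁻¹ : K) • (a • w) ∈ Q := hsmul_of _ _ h
    rwa [smul_smul, inv_mul_cancel₀ ha, one_smul] at h2
  -- eigenvectors
  have hu : φ u = u := by
    rw [hu_def, map_add, map_smul, hφx, hφy, hα]
    module
  have hv : φ v = (-β) • v := by
    rw [hv_def, map_sub, hφx, hφy, hα]
    module
  have hsu : φ.symm u = u := φ.symm_apply_eq.mpr hu.symm
  have hsv : φ.symm v = c • v := by
    have h : v = (-β) • φ.symm v := by
      conv_lhs => rw [← φ.symm_apply_apply v, hv, map_smul]
    have := congrArg (fun w : R => c • w) h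
    simp only [smul_smul, hc_def, inv_mul_cancel₀ hnb, one_smul] at this
    exact this.symm
  have hnu : ∀ n : ℕ, (φ.symm ^ n) u = u := by
    intro n; induction n with
    | zero => rfl
    | succ n ih => rw [pow_succ, AlgEquiv.mul_apply, hsu, ih]
  have hnv : ∀ n : ℕ, (φ.symm ^ n) v = c ^ n • v := by
    intro n; induction n with
    | zero => simp
    | succ n ih =>
      rw [pow_succ, AlgEquiv.mul_apply, hsv, map_smul, ih, smul_smul, pow_succ]
      ring_nf
  have hX0 : ((1 : K) + β) • X 0 = u - v := by
    rw [hu_def, hv_def]; module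
  -- membership characterization
  have hmem : ∀ n : ℕ,
      (X 0 ∈ Ideal.map ((φ ^ n).toAlgHom : R →ₐ[K] R) Q ↔ u - c ^ n • v ∈ Q) := by
    intro n
    have e1 : Ideal.map ((φ ^ n).toAlgHom : R →ₐ[K] R) Q
        = Ideal.map ((φ ^ n : R ≃ₐ[K] R) : R ≃+* R) Q := rfl
    rw [e1, ← Ideal.symm_apply_mem_of_equiv_iff]
    have e2 : ((φ ^ n : R ≃ₐ[K] R) : R ≃+* R).symm (X 0) = (φ.symm ^ n) (X 0) := by
      have : (φ ^ n).symm = φ.symm ^ n := by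
        show (φ ^ n)⁻¹ = φ⁻¹ ^ n
        rw [inv_pow]
      rw [show ((φ ^ n : R ≃ₐ[K] R) : R ≃+* R).symm (X 0) = (φ ^ n).symm (X 0) from rfl,
        this]
    rw [e2]
    have e3 : (φ.symm ^ n) (X 0) = ((1 : K) + β)⁻¹ • (u - c ^ n • v) := by
      have hX0' : X 0 = ((1 : K) + β)⁻¹ • (u - v) := by
        rw [← hX0, smul_smul, inv_mul_cancel₀ hβ1, one_smul]
      rw [hX0', map_smul, map_sub, hnu, hnv]
    rw [e3]
    exact ⟨fun h => hsmul _ _ (inv_ne_zero hβ1) h, fun h => hsmul_of _ _ h⟩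
  -- powers of c are injective
  have hpow : ∀ a b : ℕ, a < b → c ^ b ≠ c ^ a := by
    intro a b hab h
    have h2 : c ^ (b - a) = 1 := by
      have : c ^ (b - a) * c ^ a = 1 * c ^ a := by
        rw [← pow_add, Nat.sub_add_cancel hab.le, one_mul, h]
      exact mul_right_cancel₀ (pow_ne_zero _ hc0) this
    rw [hc_def, inv_pow, inv_eq_one] at h2
    exact hμru _ (Nat.sub_pos_of_lt hab) h2
  -- extract two indices
  obtain ⟨n, hn, m, hm, hnm⟩ := hinf.nontrivial
  have Hn : u - c ^ n • v ∈ Q := (hmem n).1 hn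
  have Hm : u - c ^ m • v ∈ Q := (hmem m).1 hm
  have hd : c ^ m - c ^ n ≠ 0 := by
    rcases hnm.lt_or_gt with h | h
    · exact sub_ne_zero.mpr (hpow n m h)
    · exact sub_ne_zero.mpr fun e => hpow m n h e.symm
  have hvQ : v ∈ Q := by
    have h := Q.sub_mem Hn Hm
    rw [show (u - c ^ n • v) - (u - c ^ m • v) = (c ^ m - c ^ n) • v by module] at h
    exact hsmul _ _ hd h
  have huQ : u ∈ Q := by
    have h := Q.add_mem Hn (hsmul_of (c ^ n) v hvQ)
    rwa [sub_add_cancel] at h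
  have hX0Q : X 0 ∈ Q := by
    refine hsmul _ _ hβ1 ?_
    rw [hX0]; exact Q.sub_mem huQ hvQ
  have hX1Q : X 1 ∈ Q := by
    have h := Q.add_mem hvQ hX0Q
    rwa [hv_def, sub_add_cancel] at h
  -- Q is the ideal generated by the variables
  set I : Ideal R := Ideal.span (X '' (Set.univ : Set (Fin 2))) with hI_def
  have hIQ : I ≤ Q := by
    rw [hI_def, Ideal.span_le]
    rintro _ ⟨i, -, rfl⟩
    fin_cases i
    · exact hX0Q
    · exact hX1Q
  have hQI : Q = I := by
    refine le_antisymm (fun f hf => ?_) hIQ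
    have hfc : f - C (constantCoeff f) ∈ I := by
      rw [hI_def, mem_ideal_span_X_image]
      intro m hm
      by_contra hc
      push_neg at hc
      have hm0 : m = 0 := by
        ext i; exact hc i (Set.mem_univ i)
      rw [mem_support_iff] at hm
      apply hm
      rw [hm0, coeff_sub]
      rw [show (coeff 0 (C (constantCoeff f)) : K) = constantCoeff f from coeff_zero_C _,
        show (coeff 0 f : K) = constantCoeff f from rfl, sub_self]
    have hCc : C (constantCoeff f) ∈ Q := by
      have h := Q.sub_mem hf (hIQ hfc)
      rwa [sub_sub_cancel] at h
    have hc00 : constantCoeff f = 0 := by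
      by_contra h
      have h1' : (1 : R) ∈ Q := by
        have h2 := Q.mul_mem_left (C (constantCoeff f)⁻¹) hCc
        rwa [← C_mul, inv_mul_cancel₀ h, C_1] at h2
      exact hQ.ne_top ((Ideal.eq_top_iff_one Q).mpr h1')
    rw [show f = f - C (constantCoeff f) by rw [hc00, map_zero, sub_zero]]
    exact hfc
  -- conclude with n = 1
  refine ⟨1, le_refl 1, ?_⟩
  have hco : ((φ ^ 1).toAlgHom : R →ₐ[K] R) = (φ.toAlgHom : R →ₐ[K] R) := by
    rw [pow_one]
  rw [hco, hQI, hI_def, Ideal.map_span]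
  have hcoe : (⇑(φ.toAlgHom : R →ₐ[K] R)) = ⇑φ := rfl
  rw [hcoe]
  apply le_antisymm
  · rw [Ideal.span_le]
    rintro _ ⟨_, ⟨i, -, rfl⟩, rfl⟩
    have h01 : i = 0 ∨ i = 1 := by omega
    rcases h01 with rfl | rfl
    · rw [hφx]
      exact Ideal.subset_span ⟨1, Set.mem_univ _, rfl⟩
    · rw [hφy]
      have h0 : (X 0 : R) ∈ Ideal.span (X '' (Set.univ : Set (Fin 2))) :=
        Ideal.subset_span ⟨0, Set.mem_univ _, rfl⟩
      have h1' : (X 1 : R) ∈ Ideal.span (X '' (Set.univ : Set (Fin 2))) :=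
        Ideal.subset_span ⟨1, Set.mem_univ _, rfl⟩
      refine Ideal.add_mem _ ?_ ?_
      · rw [smul_eq_C_mul]; exact Ideal.mul_mem_left _ _ h1'
      · rw [smul_eq_C_mul]; exact Ideal.mul_mem_left _ _ h0
  · rw [Ideal.span_le]
    rintro _ ⟨i, -, rfl⟩
    have h01 : i = 0 ∨ i = 1 := by omega
    set J : Ideal R := Ideal.span (⇑φ '' (X '' (Set.univ : Set (Fin 2)))) with hJ_def
    have hx1 : (X 1 : R) ∈ J := by
      rw [← hφx]
      exact Ideal.subset_span ⟨X 0, ⟨0, Set.mem_univ _, rfl⟩, rfl⟩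
    have hφx1 : φ (X 1) ∈ J :=
      Ideal.subset_span ⟨X 1, ⟨1, Set.mem_univ _, rfl⟩, rfl⟩
    rcases h01 with rfl | rfl
    · have hsub : φ (X 1) - α • X 1 ∈ J := by
        refine J.sub_mem hφx1 ?_
        rw [smul_eq_C_mul]; exact Ideal.mul_mem_left _ _ hx1
      have hmem' : (β⁻¹ : K) • (φ (X 1) - α • X 1) ∈ J := by
        rw [smul_eq_C_mul]; exact Ideal.mul_mem_left _ _ hsub
      have e : (β⁻¹ : K) • (φ (X 1) - α • X 1) = X 0 := by
        rw [hφy, add_sub_cancel_left, smul_smul, inv_mul_cancel₀ hβ, one_smul]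
      rwa [e] at hmem'
    · exact hx1
end
end
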